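/- For every real x₀ > 0 there exists a constant C = C(x₀) > 0 such that for all x ∈ [0, x₀] and all n ∈ ℕ, |g̃^{(n)}(1,x)|/n! ≤ C·(n+1). -/

import Mathlib

/-!
`g̃(·, x)` is the restriction to the real axis of the holomorphic function
`z ↦ z^{-1/2} exp(-x²/z)` on the slit plane, whose modulus on the half-plane `δ ≤ Re z` is at
most `δ^{-1/2} ≤ δ⁻¹`, whatever `x` is. Cauchy's estimate on the circle about `1` of radius
`1 - δ` with `δ = 1/(n+2)` bounds the `n`-th derivative at `1` by
`n! (n+2) ((n+2)/(n+1))ⁿ ≤ 2e · n! (n+1)`.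
-/

/-- `g̃(t,x) = t^{-1/2} · exp(-x²/t)`. -/
noncomputable def gTilde (t x : ℝ) : ℝ := t ^ (-(1 / 2) : ℝ) * Real.exp (-x ^ 2 / t)

open Complex Metric Filter

noncomputable def gTildeC (x : ℝ) (z : ℂ) : ℂ := z ^ ((-(1 / 2) : ℝ) : ℂ) * exp (-(x : ℂ) ^ 2 / z)

theorem iteratedDeriv_re_comp_ofReal {F : ℂ → ℂ} {U : Set ℂ} (hU : IsOpen U)
    (hF : DifferentiableOn ℂ F U) (n : ℕ) {t : ℝ} (ht : (t : ℂ) ∈ U) :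
    iteratedDeriv n (fun s : ℝ => (F s).re) t = (iteratedDeriv n F t).re := by
  induction n generalizing t with
  | zero => simp
  | succ n ih =>
    have hderiv : HasDerivAt (fun s : ℝ => (iteratedDeriv n F s).re)
        (iteratedDeriv (n + 1) F t).re t := by
      rw [iteratedDeriv_succ]
      have h := (hF.analyticOnNhd hU).iterated_deriv n t ht
      rw [← iteratedDeriv_eq_iterate] at h
      exact h.differentiableAt.hasDerivAt.real_of_complex
    have heq : iteratedDeriv n (fun s : ℝ => (F s).re) =ᶠ[nhds t]
        fun s : ℝ => (iteratedDeriv n F s).re := by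
      filter_upwards [(hU.preimage continuous_ofReal).mem_nhds ht] with s hs using ih hs
    rw [iteratedDeriv_succ, heq.deriv_eq, hderiv.deriv]

theorem ofReal_gTilde {s : ℝ} (hs : 0 < s) (x : ℝ) : (gTilde s x : ℂ) = gTildeC x s := by
  simp only [gTilde, gTildeC, ofReal_mul, ofReal_cpow hs.le, ofReal_exp, ofReal_div,
    ofReal_neg, ofReal_pow]

theorem differentiableOn_gTildeC (x : ℝ) : DifferentiableOn ℂ (gTildeC x) slitPlane :=
  fun _ hz => ((differentiableAt_id.cpow_const hz).mul
    ((differentiableAt_const _).div differentiableAt_id (slitPlane_ne_zero hz)).cexp)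
    |>.differentiableWithinAt

theorem norm_exp_neg_sq_div_le_one (x : ℝ) {z : ℂ} (hz : 0 ≤ z.re) :
    ‖exp (-(x : ℂ) ^ 2 / z)‖ ≤ 1 := by
  have hre : (-(x : ℂ) ^ 2 / z).re = -x ^ 2 * (z.re / normSq z) := by
    rw [div_eq_mul_inv, ← ofReal_pow, ← ofReal_neg, re_ofReal_mul, inv_re]
  rw [norm_exp, Real.exp_le_one_iff, hre]
  exact mul_nonpos_of_nonpos_of_nonneg (neg_nonpos.mpr (sq_nonneg x))
    (div_nonneg hz (normSq_nonneg z))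

theorem norm_gTildeC_le_inv {δ : ℝ} (hδ : 0 < δ) (hδ1 : δ ≤ 1) (x : ℝ) {z : ℂ}
    (hz : δ ≤ z.re) : ‖gTildeC x z‖ ≤ δ⁻¹ := by
  have hnorm : δ ≤ ‖z‖ := hz.trans (re_le_norm z)
  have hpow : ‖z ^ ((-(1 / 2) : ℝ) : ℂ)‖ ≤ δ⁻¹ := by
    rw [norm_cpow_real, ← Real.rpow_neg_one]
    calc ‖z‖ ^ (-(1 / 2) : ℝ) ≤ δ ^ (-(1 / 2) : ℝ) :=
          Real.rpow_le_rpow_of_nonpos hδ hnorm (by norm_num)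
      _ ≤ δ ^ (-1 : ℝ) := Real.rpow_le_rpow_of_exponent_ge hδ hδ1 (by norm_num)
  calc ‖gTildeC x z‖
      = ‖z ^ ((-(1 / 2) : ℝ) : ℂ)‖ * ‖exp (-(x : ℂ) ^ 2 / z)‖ := norm_mul _ _
    _ ≤ δ⁻¹ * 1 := mul_le_mul hpow (norm_exp_neg_sq_div_le_one x (hδ.le.trans hz))
        (norm_nonneg _) (inv_nonneg.mpr hδ.le)
    _ = δ⁻¹ := mul_one _

theorem le_re_of_mem_closedBall_one {δ : ℝ} {z : ℂ} (hz : z ∈ closedBall (1 : ℂ) (1 - δ)) :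
    δ ≤ z.re := by
  have h := (abs_le.mp ((abs_re_le_norm (z - 1)).trans (mem_closedBall_iff_norm.mp hz))).1
  rw [sub_re, one_re] at h
  linarith

theorem norm_iteratedDeriv_gTildeC_one_le (x : ℝ) (n : ℕ) {δ : ℝ} (hδ : 0 < δ) (hδ1 : δ < 1) :
    ‖iteratedDeriv n (gTildeC x) 1‖ ≤ n.factorial * δ⁻¹ / (1 - δ) ^ n := by
  have hball : closedBall (1 : ℂ) (1 - δ) ⊆ slitPlane := fun z hz =>
    Or.inl (hδ.trans_le (le_re_of_mem_closedBall_one hz))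
  exact norm_iteratedDeriv_le_of_forall_mem_sphere_norm_le n (by linarith)
    ((differentiableOn_gTildeC x).diffContOnCl_ball hball) fun z hz =>
      norm_gTildeC_le_inv hδ hδ1.le x (le_re_of_mem_closedBall_one (sphere_subset_closedBall hz))

theorem inv_one_sub_inv_add_two_pow_le_exp_one (n : ℕ) :
    ((1 - ((n : ℝ) + 2)⁻¹) ^ n)⁻¹ ≤ Real.exp 1 := by
  have hq : 1 - ((n : ℝ) + 2)⁻¹ = (1 + ((n + 1 : ℕ) : ℝ)⁻¹)⁻¹ := by
    push_cast
    field_simp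
    ring
  have hle : 1 ≤ 1 + ((n + 1 : ℕ) : ℝ)⁻¹ := le_add_of_nonneg_right (by positivity)
  rw [hq, inv_pow, inv_inv]
  exact (pow_le_pow_right₀ hle n.le_succ).trans Real.one_add_inv_pow_le_exp

theorem stmt_8_general (x₀ : ℝ) :
    ∃ C > (0 : ℝ), ∀ x ∈ Set.Icc (0 : ℝ) x₀, ∀ n : ℕ,
      |iteratedDeriv n (fun s => gTilde s x) 1| / (n.factorial : ℝ) ≤ C * ((n : ℝ) + 1) := by
  refine ⟨2 * Real.exp 1, by positivity, fun x _ n => ?_⟩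
  have hagree : (fun s => gTilde s x) =ᶠ[nhds 1] fun s : ℝ => (gTildeC x s).re :=
    (eventually_gt_nhds one_pos).mono fun s hs => by simp only [← ofReal_gTilde hs, ofReal_re]
  have hreal : iteratedDeriv n (fun s => gTilde s x) 1 = (iteratedDeriv n (gTildeC x) 1).re := by
    rw [hagree.iteratedDeriv_eq n]
    exact_mod_cast iteratedDeriv_re_comp_ofReal isOpen_slitPlane (differentiableOn_gTildeC x) n
      (t := 1) (by simp)
  have hδ : (0 : ℝ) < ((n : ℝ) + 2)⁻¹ := by positivity
  have hδ1 : ((n : ℝ) + 2)⁻¹ < 1 := inv_lt_one_of_one_lt₀ (by linarith [n.cast_nonneg (α := ℝ)])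
  have hcauchy := norm_iteratedDeriv_gTildeC_one_le x n hδ hδ1
  rw [inv_inv, div_eq_mul_inv] at hcauchy
  rw [div_le_iff₀ (by positivity), hreal]
  calc |(iteratedDeriv n (gTildeC x) 1).re| ≤ ‖iteratedDeriv n (gTildeC x) 1‖ :=
        abs_re_le_norm _
    _ ≤ n.factorial * ((n : ℝ) + 2) * Real.exp 1 := hcauchy.trans
        (mul_le_mul_of_nonneg_left (inv_one_sub_inv_add_two_pow_le_exp_one n) (by positivity))
    _ ≤ 2 * Real.exp 1 * ((n : ℝ) + 1) * n.factorial := by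
        have : 0 ≤ (n.factorial : ℝ) * Real.exp 1 := by positivity
        nlinarith [n.cast_nonneg (α := ℝ)]

/-- For every `x₀ > 0` there is `C > 0` such that for all `x ∈ [0,x₀]` and all `n : ℕ`,
`|g̃^{(n)}(1,x)| / n! ≤ C (n+1)`. -/
theorem stmt_8 (x₀ : ℝ) (hx₀ : 0 < x₀) :
    ∃ C > (0 : ℝ), ∀ x ∈ Set.Icc (0 : ℝ) x₀, ∀ n : ℕ,
      |iteratedDeriv n (fun s => gTilde s x) 1| / (n.factorial : ℝ) ≤ C * ((n : ℝ) + 1) :=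
  stmt_8_general x₀
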